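/- arXiv:2507.07635 — 12 statements merged into one kernel-verified Lean document; each statement's English description precedes it below -/
import Mathlib

section
/- Let ω be a nonzero real number, δt a nonzero real number, and A, B complex numbers, and let f(t) = A·exp(iωt) + B·exp(−iωt). Then for every real t, (f(t + δt/2) − f(t − δt/2))/δt = f′(t)·κ, where κ = 2 sin(ωδt/2)/(ωδt). In other words, the uniform k-space correction κ makes the staggered central difference of the general solution of f″ = −ω²f exactly equal to its derivative. -/
open Complex Real

theorem uniform_kspace_correction_exact
    (ω δt : ℝ) (hω : ω ≠ 0) (hδt : δt ≠ 0) (A B : ℂ)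
    (f f' : ℝ → ℂ)
    (hf : ∀ t : ℝ, f t = A * Complex.exp (Complex.I * ω * t) + B * Complex.exp (-(Complex.I * ω * t)))
    (hf' : ∀ t : ℝ, f' t = Complex.I * ω * (A * Complex.exp (Complex.I * ω * t) - B * Complex.exp (-(Complex.I * ω * t)))) :
    ∀ t : ℝ, (f (t + δt / 2) - f (t - δt / 2)) / (δt : ℂ)
      = f' t * ((2 * Real.sin (ω * δt / 2) / (ω * δt) : ℝ) : ℂ) := by
  intro t
  have hsin : Complex.exp (Complex.I * ω * (δt / 2)) - Complex.exp (-(Complex.I * ω * (δt / 2)))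
      = 2 * Complex.I * ((Real.sin (ω * δt / 2) : ℝ) : ℂ) := by
    rw [Complex.ofReal_sin, Complex.sin]
    rw [show -(((ω * δt / 2 : ℝ) : ℂ)) * Complex.I = -(Complex.I * ω * (δt / 2)) by push_cast; ring,
      show (((ω * δt / 2 : ℝ) : ℂ)) * Complex.I = Complex.I * ω * (δt / 2) by push_cast; ring]
    linear_combination (Complex.exp (Complex.I * ω * (δt / 2)) - Complex.exp (-(Complex.I * ω * (δt / 2)))) * Complex.I_sq
  have hcast : ((2 * Real.sin (ω * δt / 2) / (ω * δt) : ℝ) : ℂ)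
      = 2 * ((Real.sin (ω * δt / 2) : ℝ) : ℂ) / ((ω : ℂ) * (δt : ℂ)) := by
    push_cast
    ring
  rw [hf, hf, hf', hcast]
  have e1 : Complex.I * ω * ((t + δt / 2 : ℝ) : ℂ) = Complex.I * ω * t + Complex.I * ω * (δt / 2) := by
    push_cast; ring
  have e2 : Complex.I * ω * ((t - δt / 2 : ℝ) : ℂ) = Complex.I * ω * t - Complex.I * ω * (δt / 2) := by
    push_cast; ring
  rw [e1, e2,
    show -(Complex.I * ω * t + Complex.I * ω * (δt / 2)) = -(Complex.I * ω * t) + -(Complex.I * ω * (δt / 2)) by ring,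
    show -(Complex.I * ω * t - Complex.I * ω * (δt / 2)) = -(Complex.I * ω * t) + Complex.I * ω * (δt / 2) by ring,
    show Complex.I * ω * t - Complex.I * ω * (δt / 2) = Complex.I * ω * t + -(Complex.I * ω * (δt / 2)) by ring,
    Complex.exp_add, Complex.exp_add, Complex.exp_add, Complex.exp_add]
  have hδ : (δt : ℂ) ≠ 0 := Complex.ofReal_ne_zero.mpr hδt
  have hωc : (ω : ℂ) ≠ 0 := Complex.ofReal_ne_zero.mpr hω
  set E := Complex.exp (Complex.I * ω * t) with hE
  set E' := Complex.exp (-(Complex.I * ω * t)) with hE'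
  set P := Complex.exp (Complex.I * ω * (δt / 2)) with hPdef
  set Q := Complex.exp (-(Complex.I * ω * (δt / 2))) with hQdef
  set s := ((Real.sin (ω * δt / 2) : ℝ) : ℂ) with hs
  field_simp
  linear_combination (A * E - B * E') * hsin
end

section
/- Let ω be a nonzero real number and δt₁, δt₂ positive real numbers with cos(ωδt₁/2) ≠ cos(ωδt₂/2). Then there exists no complex number κ such that for all complex numbers A, B and all real t, with f(t) = A·exp(iωt) + B·exp(−iωt), the identity 2(f(t + δt₂/2) − f(t − δt₁/2))/(δt₁ + δt₂) = κ·f′(t) holds. That is, no single k-space correction of the uniform-step form exists for non-uniform time steps. -/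
open Complex Real

theorem no_single_kspace_correction_for_nonuniform_steps
    (ω δt₁ δt₂ : ℝ) (hω : ω ≠ 0) (h1 : 0 < δt₁) (h2 : 0 < δt₂)
    (hcos : Real.cos (ω * δt₁ / 2) ≠ Real.cos (ω * δt₂ / 2)) :
    ¬ ∃ κ : ℂ, ∀ A B : ℂ, ∀ t : ℝ,
      2 * ((A * Complex.exp (Complex.I * ω * (t + δt₂ / 2))
              + B * Complex.exp (-(Complex.I * ω * (t + δt₂ / 2))))
          - (A * Complex.exp (Complex.I * ω * (t - δt₁ / 2))
              + B * Complex.exp (-(Complex.I * ω * (t - δt₁ / 2))))) / ((δt₁ : ℂ) + δt₂)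
        = κ * (Complex.I * ω * (A * Complex.exp (Complex.I * ω * t)
              - B * Complex.exp (-(Complex.I * ω * t)))) := by
  rintro ⟨κ, h⟩
  have hA := h 1 0 0
  have hB := h 0 1 0
  simp only [one_mul, zero_mul, mul_zero, add_zero, zero_add, zero_sub, mul_one, mul_neg,
    neg_neg, neg_zero, Complex.exp_zero, Complex.ofReal_zero, sub_zero] at hA hB
  have hd : ((δt₁ : ℂ) + δt₂) ≠ 0 := by
    have : (0:ℝ) < δt₁ + δt₂ := by linarith
    exact_mod_cast (by exact_mod_cast this.ne' : ((δt₁ + δt₂ : ℝ) : ℂ) ≠ 0)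
  have key : Complex.exp ((↑(ω * δt₂ / 2) : ℂ) * Complex.I)
      + Complex.exp ((↑(-(ω * δt₂ / 2)) : ℂ) * Complex.I)
      = Complex.exp ((↑(-(ω * δt₁ / 2)) : ℂ) * Complex.I)
      + Complex.exp ((↑(ω * δt₁ / 2) : ℂ) * Complex.I) := by
    rw [div_eq_iff hd] at hA hB
    have h' := congrArg₂ (· + ·) hA hB
    have e1 : Complex.I * (ω : ℂ) * ((δt₂ : ℂ) / 2) = (↑(ω * δt₂ / 2) : ℂ) * Complex.I := by
      push_cast; ring
    have e2 : -((↑(ω * δt₂ / 2) : ℂ) * Complex.I) = (↑(-(ω * δt₂ / 2)) : ℂ) * Complex.I := by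
      push_cast; ring
    have e3 : -((↑(ω * δt₁ / 2) : ℂ) * Complex.I) = (↑(-(ω * δt₁ / 2)) : ℂ) * Complex.I := by
      push_cast; ring
    have e4 : Complex.I * (ω : ℂ) * ((δt₁ : ℂ) / 2) = (↑(ω * δt₁ / 2) : ℂ) * Complex.I := by
      push_cast; ring
    rw [e1, e4, e2, e3] at h'
    linear_combination h' / 2
  have key2 := congrArg Complex.re key
  simp only [Complex.add_re, Complex.exp_ofReal_mul_I_re, Real.cos_neg] at key2
  exact hcos (by linarith)
end

section
/- Let δt₁, δt₂ be positive real numbers. Suppose that for every positive real ω there exists a complex number κ(ω) such that for all complex numbers A, B and all real t, with f(t) = A·exp(iωt) + B·exp(−iωt), the identity 2(f(t + δt₂/2) − f(t − δt₁/2))/(δt₁ + δt₂) = κ(ω)·f′(t) holds. Then δt₁ = δt₂. That is, a single-term k-space correction valid for all wavenumbers exists only for uniform time stepping. -/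
open Complex Real

lemma aux_cos_eq (a b : ℝ) (hb : 0 < b) (hab : a ≤ b) (ha : 0 < a)
    (hc : ∀ ω : ℝ, 0 < ω → Real.cos (ω * a) = Real.cos (ω * b)) : a = b := by
  have hω : 0 < π / b := div_pos Real.pi_pos hb
  have hcc := hc (π / b) hω
  rw [div_mul_cancel₀ _ (ne_of_gt hb)] at hcc
  have h1 : π / b * a ∈ Set.Icc (0:ℝ) π := by
    constructor
    · positivity
    · rw [div_mul_eq_mul_div, div_le_iff₀ hb]
      nlinarith [Real.pi_pos]
  have h2 : π ∈ Set.Icc (0:ℝ) π := ⟨le_of_lt Real.pi_pos, le_refl π⟩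
  have heq := Real.injOn_cos h1 h2 hcc
  field_simp at heq
  exact heq

theorem single_kspace_correction_forces_uniform_steps
    (δt₁ δt₂ : ℝ) (h1 : 0 < δt₁) (h2 : 0 < δt₂)
    (h : ∀ ω : ℝ, 0 < ω → ∃ κ : ℂ, ∀ A B : ℂ, ∀ t : ℝ,
      2 * ((A * Complex.exp (Complex.I * ω * (t + δt₂ / 2))
              + B * Complex.exp (-(Complex.I * ω * (t + δt₂ / 2))))
          - (A * Complex.exp (Complex.I * ω * (t - δt₁ / 2))
              + B * Complex.exp (-(Complex.I * ω * (t - δt₁ / 2))))) / ((δt₁ : ℂ) + δt₂)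
        = κ * (Complex.I * ω * (A * Complex.exp (Complex.I * ω * t)
              - B * Complex.exp (-(Complex.I * ω * t))))) :
    δt₁ = δt₂ := by
  have key : ∀ ω : ℝ, 0 < ω → Real.cos (ω * (δt₁ / 2)) = Real.cos (ω * (δt₂ / 2)) := by
    intro ω hω
    obtain ⟨κ, hκ⟩ := h ω hω
    have e1 := hκ 1 0 0
    have e2 := hκ 0 1 0
    have hs : ((δt₁ : ℂ) + δt₂) ≠ 0 := by
      have hp : (0:ℝ) < δt₁ + δt₂ := by linarith
      simp only [← Complex.ofReal_add]
      exact_mod_cast ne_of_gt hp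
    simp only [Complex.ofReal_zero, zero_add, zero_sub, one_mul, zero_mul, add_zero,
      mul_zero, mul_one, mul_neg, neg_neg, neg_zero, Complex.exp_zero, sub_zero] at e1 e2
    rw [div_eq_iff hs] at e1 e2
    have hsum : Complex.exp (Complex.I * ω * (δt₂ / 2)) + Complex.exp (-(Complex.I * ω * (δt₂ / 2)))
        = Complex.exp (Complex.I * ω * (δt₁ / 2)) + Complex.exp (-(Complex.I * ω * (δt₁ / 2))) := by
      linear_combination (e1 + e2) / 2
    have hcC : (Real.cos (ω * (δt₂ / 2)) : ℂ) = (Real.cos (ω * (δt₁ / 2)) : ℂ) := by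
      rw [Complex.ofReal_cos, Complex.ofReal_cos, Complex.cos, Complex.cos]
      rw [show ((ω * (δt₂ / 2) : ℝ) : ℂ) * Complex.I = Complex.I * ω * (δt₂ / 2) by
            push_cast; ring,
          show -(((ω * (δt₂ / 2) : ℝ) : ℂ)) * Complex.I = -(Complex.I * ω * (δt₂ / 2)) by
            push_cast; ring,
          show ((ω * (δt₁ / 2) : ℝ) : ℂ) * Complex.I = Complex.I * ω * (δt₁ / 2) by
            push_cast; ring,
          show -(((ω * (δt₁ / 2) : ℝ) : ℂ)) * Complex.I = -(Complex.I * ω * (δt₁ / 2)) by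
            push_cast; ring,
          hsum]
    exact_mod_cast hcC.symm
  rcases le_total (δt₁ / 2) (δt₂ / 2) with hle | hle
  · have := aux_cos_eq (δt₁/2) (δt₂/2) (by linarith) hle (by linarith) key
    linarith
  · have := aux_cos_eq (δt₂/2) (δt₁/2) (by linarith) hle (by linarith)
      (fun ω hω => (key ω hω).symm)
    linarith
end

section
/- Let ω be a nonzero real number and δt₁, δt₂ real numbers with δt₁ + δt₂ ≠ 0. Define κ₁ = 2(sin(ωδt₂/2) + sin(ωδt₁/2))/(ω(δt₁ + δt₂)) and κ₂ = 2(cos(ωδt₂/2) − cos(ωδt₁/2))/(δt₁ + δt₂). Then for all complex numbers A, B and all real t, with f(t) = A·exp(iωt) + B·exp(−iωt), the identity 2(f(t + δt₂/2) − f(t − δt₁/2))/(δt₁ + δt₂) = κ₁·f′(t) + κ₂·f(t) holds exactly. -/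
open Complex Real

theorem nonuniform_kspace_corrections_exact
    (ω δt₁ δt₂ : ℝ) (hω : ω ≠ 0) (hsum : δt₁ + δt₂ ≠ 0) :
    ∀ A B : ℂ, ∀ t : ℝ,
      2 * ((A * Complex.exp (Complex.I * ω * (t + δt₂ / 2))
              + B * Complex.exp (-(Complex.I * ω * (t + δt₂ / 2))))
          - (A * Complex.exp (Complex.I * ω * (t - δt₁ / 2))
              + B * Complex.exp (-(Complex.I * ω * (t - δt₁ / 2))))) / ((δt₁ : ℂ) + δt₂)
        = ((2 * (Real.sin (ω * δt₂ / 2) + Real.sin (ω * δt₁ / 2)) / (ω * (δt₁ + δt₂)) : ℝ) : ℂ)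
            * (Complex.I * ω * (A * Complex.exp (Complex.I * ω * t)
                - B * Complex.exp (-(Complex.I * ω * t))))
          + ((2 * (Real.cos (ω * δt₂ / 2) - Real.cos (ω * δt₁ / 2)) / (δt₁ + δt₂) : ℝ) : ℂ)
            * (A * Complex.exp (Complex.I * ω * t)
                + B * Complex.exp (-(Complex.I * ω * t))) := by
  intro A B t
  have e1 : Complex.exp (Complex.I * ω * (t + δt₂ / 2))
      = Complex.exp (Complex.I * ω * t)
        * (Complex.cos (ω * δt₂ / 2) + Complex.sin (ω * δt₂ / 2) * Complex.I) := by
    rw [show (Complex.I * ω * (t + δt₂ / 2) : ℂ)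
        = Complex.I * ω * t + (ω * δt₂ / 2 : ℝ) * Complex.I by push_cast; ring,
      Complex.exp_add, Complex.exp_mul_I]
    push_cast; ring
  have e2 : Complex.exp (-(Complex.I * ω * (t + δt₂ / 2)))
      = Complex.exp (-(Complex.I * ω * t))
        * (Complex.cos (ω * δt₂ / 2) - Complex.sin (ω * δt₂ / 2) * Complex.I) := by
    rw [show (-(Complex.I * ω * (t + δt₂ / 2)) : ℂ)
        = -(Complex.I * ω * t) + (-(ω * δt₂ / 2) : ℝ) * Complex.I by push_cast; ring,
      Complex.exp_add, Complex.exp_mul_I]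
    push_cast
    rw [Complex.cos_neg, Complex.sin_neg]
    ring
  have e3 : Complex.exp (Complex.I * ω * (t - δt₁ / 2))
      = Complex.exp (Complex.I * ω * t)
        * (Complex.cos (ω * δt₁ / 2) - Complex.sin (ω * δt₁ / 2) * Complex.I) := by
    rw [show (Complex.I * ω * (t - δt₁ / 2) : ℂ)
        = Complex.I * ω * t + (-(ω * δt₁ / 2) : ℝ) * Complex.I by push_cast; ring,
      Complex.exp_add, Complex.exp_mul_I]
    push_cast
    rw [Complex.cos_neg, Complex.sin_neg]
    ring
  have e4 : Complex.exp (-(Complex.I * ω * (t - δt₁ / 2)))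
      = Complex.exp (-(Complex.I * ω * t))
        * (Complex.cos (ω * δt₁ / 2) + Complex.sin (ω * δt₁ / 2) * Complex.I) := by
    rw [show (-(Complex.I * ω * (t - δt₁ / 2)) : ℂ)
        = -(Complex.I * ω * t) + (ω * δt₁ / 2 : ℝ) * Complex.I by push_cast; ring,
      Complex.exp_add, Complex.exp_mul_I]
    push_cast; ring
  rw [e1, e2, e3, e4]
  have hω' : (ω : ℂ) ≠ 0 := by exact_mod_cast hω
  have hsum' : (δt₁ : ℂ) + δt₂ ≠ 0 := by exact_mod_cast hsum
  push_cast [Complex.ofReal_sin, Complex.ofReal_cos]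
  field_simp
  ring
end

section
/- Let ω be a nonzero real number and δt₁, δt₂ real numbers with δt₁ + δt₂ ≠ 0. Suppose κ₁, κ₂ are complex numbers such that for all complex numbers A, B and all real t, with f(t) = A·exp(iωt) + B·exp(−iωt), the identity 2(f(t + δt₂/2) − f(t − δt₁/2))/(δt₁ + δt₂) = κ₁·f′(t) + κ₂·f(t) holds. Then necessarily κ₁ = 2(sin(ωδt₂/2) + sin(ωδt₁/2))/(ω(δt₁ + δt₂)) and κ₂ = 2(cos(ωδt₂/2) − cos(ωδt₁/2))/(δt₁ + δt₂); i.e. the pair of non-uniform k-space corrections is unique and solves the system κ₂ + iωκ₁ = 2(exp(iωδt₂/2) − exp(−iωδt₁/2))/(δt₁ + δt₂) and κ₂ − iωκ₁ = 2(exp(−iωδt₂/2) − exp(iωδt₁/2))/(δt₁ + δt₂). -/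
open Complex Real
theorem nonuniform_kspace_corrections_unique
    (ω δt₁ δt₂ : ℝ) (hω : ω ≠ 0) (hsum : δt₁ + δt₂ ≠ 0) (κ₁ κ₂ : ℂ)
    (h : ∀ A B : ℂ, ∀ t : ℝ,
      2 * ((A * Complex.exp (Complex.I * ω * (t + δt₂ / 2))
              + B * Complex.exp (-(Complex.I * ω * (t + δt₂ / 2))))
          - (A * Complex.exp (Complex.I * ω * (t - δt₁ / 2))
              + B * Complex.exp (-(Complex.I * ω * (t - δt₁ / 2))))) / ((δt₁ : ℂ) + δt₂)
        = κ₁ * (Complex.I * ω * (A * Complex.exp (Complex.I * ω * t)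
                - B * Complex.exp (-(Complex.I * ω * t))))
          + κ₂ * (A * Complex.exp (Complex.I * ω * t)
                + B * Complex.exp (-(Complex.I * ω * t)))) :
    κ₁ = ((2 * (Real.sin (ω * δt₂ / 2) + Real.sin (ω * δt₁ / 2)) / (ω * (δt₁ + δt₂)) : ℝ) : ℂ)
    ∧ κ₂ = ((2 * (Real.cos (ω * δt₂ / 2) - Real.cos (ω * δt₁ / 2)) / (δt₁ + δt₂) : ℝ) : ℂ)
    ∧ κ₂ + Complex.I * ω * κ₁
        = 2 * (Complex.exp (Complex.I * ω * (δt₂ / 2)) - Complex.exp (-(Complex.I * ω * (δt₁ / 2))))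
            / ((δt₁ : ℂ) + δt₂)
    ∧ κ₂ - Complex.I * ω * κ₁
        = 2 * (Complex.exp (-(Complex.I * ω * (δt₂ / 2))) - Complex.exp (Complex.I * ω * (δt₁ / 2)))
            / ((δt₁ : ℂ) + δt₂) := by
  have h1 := h 1 0 0
  have h2 := h 0 1 0
  norm_num at h1 h2
  have hS : ((δt₁ : ℂ) + δt₂) ≠ 0 := by
    exact_mod_cast Complex.ofReal_ne_zero.mpr hsum
  have hω' : (ω : ℂ) ≠ 0 := Complex.ofReal_ne_zero.mpr hω
  have e2 : Complex.I * ↑ω * (↑δt₂ / 2) = (↑(ω * δt₂ / 2) : ℂ) * Complex.I := by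
    push_cast; ring
  have e1 : Complex.I * ↑ω * (↑δt₁ / 2) = (↑(ω * δt₁ / 2) : ℂ) * Complex.I := by
    push_cast; ring
  simp only [e1, e2, ← neg_mul, Complex.exp_mul_I, Complex.cos_neg, Complex.sin_neg] at h1 h2
  rw [← Complex.ofReal_cos, ← Complex.ofReal_sin, ← Complex.ofReal_cos, ← Complex.ofReal_sin] at h1 h2
  field_simp at h1 h2
  refine ⟨?_, ?_, ?_, ?_⟩
  · push_cast
    field_simp
    push_cast at h1 h2
    linear_combination (Complex.I / 2) * h1 - (Complex.I / 2) * h2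
      + (κ₁ * ↑ω * ↑δt₁ + κ₁ * ↑ω * ↑δt₂ - 2 * Complex.sin (↑ω * ↑δt₂ / 2)
          - 2 * Complex.sin (↑ω * ↑δt₁ / 2)) * Complex.I_sq
  · push_cast
    field_simp
    push_cast at h1 h2
    linear_combination -h1/2 - h2/2
  · simp only [e1, e2, ← neg_mul, Complex.exp_mul_I, Complex.cos_neg, Complex.sin_neg]
    field_simp
    push_cast at h1 h2 ⊢
    linear_combination -h1
  · simp only [e1, e2, ← neg_mul, Complex.exp_mul_I, Complex.cos_neg, Complex.sin_neg]
    field_simp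
    push_cast at h1 h2 ⊢
    linear_combination -h2
end

section
/- Let ω be a nonzero real number and δt₁, δt₂ real numbers with δt₁ + δt₂ ≠ 0 and cos(ωδt₁/2) ≠ 0. Define the staggered k-space corrections κ₁ = (2/(δt₁ + δt₂))·(sin(ωδt₂/2)/ω + (sin(ωδt₁/2)/ω)·(cos(ωδt₂/2)/cos(ωδt₁/2))) and κ₂ = (2/(δt₁ + δt₂))·(cos(ωδt₂/2)/cos(ωδt₁/2) − 1). Then for all complex numbers A, B and all real t, with f(t) = A·exp(iωt) + B·exp(−iωt), the identity 2(f(t + δt₂/2) − f(t − δt₁/2))/(δt₁ + δt₂) = κ₁·f′(t) + κ₂·f(t − δt₁/2) holds exactly. -/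
open Complex Real

theorem staggered_kspace_corrections_exact
    (ω δt₁ δt₂ : ℝ) (hω : ω ≠ 0) (hsum : δt₁ + δt₂ ≠ 0)
    (hcos : Real.cos (ω * δt₁ / 2) ≠ 0) :
    ∀ A B : ℂ, ∀ t : ℝ,
      2 * ((A * Complex.exp (Complex.I * ω * (t + δt₂ / 2))
              + B * Complex.exp (-(Complex.I * ω * (t + δt₂ / 2))))
          - (A * Complex.exp (Complex.I * ω * (t - δt₁ / 2))
              + B * Complex.exp (-(Complex.I * ω * (t - δt₁ / 2))))) / ((δt₁ : ℂ) + δt₂)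
        = (((2 / (δt₁ + δt₂)) * (Real.sin (ω * δt₂ / 2) / ω
              + (Real.sin (ω * δt₁ / 2) / ω) * (Real.cos (ω * δt₂ / 2) / Real.cos (ω * δt₁ / 2))) : ℝ) : ℂ)
            * (Complex.I * ω * (A * Complex.exp (Complex.I * ω * t)
                - B * Complex.exp (-(Complex.I * ω * t))))
          + (((2 / (δt₁ + δt₂)) * (Real.cos (ω * δt₂ / 2) / Real.cos (ω * δt₁ / 2) - 1) : ℝ) : ℂ)
            * (A * Complex.exp (Complex.I * ω * (t - δt₁ / 2))
                + B * Complex.exp (-(Complex.I * ω * (t - δt₁ / 2)))) := by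
  intro A B t
  have hω' : (ω : ℂ) ≠ 0 := Complex.ofReal_ne_zero.mpr hω
  have hsum' : (δt₁ : ℂ) + δt₂ ≠ 0 := by
    rw [← Complex.ofReal_add]; exact Complex.ofReal_ne_zero.mpr hsum
  have hcos' : ((Real.cos (ω * δt₁ / 2) : ℝ) : ℂ) ≠ 0 := Complex.ofReal_ne_zero.mpr hcos
  have key : ∀ x : ℝ, Complex.exp (Complex.I * ω * t + (x : ℂ) * Complex.I)
      = Complex.exp (Complex.I * ω * t) * ((Real.cos x : ℂ) + (Real.sin x : ℂ) * Complex.I) := by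
    intro x
    rw [Complex.exp_add, Complex.exp_mul_I]
    push_cast
    ring
  have key2 : ∀ x : ℝ, Complex.exp (-(Complex.I * ω * t) + (x : ℂ) * Complex.I)
      = Complex.exp (-(Complex.I * ω * t)) * ((Real.cos x : ℂ) + (Real.sin x : ℂ) * Complex.I) := by
    intro x
    rw [Complex.exp_add, Complex.exp_mul_I]
    push_cast
    ring
  have e1 : Complex.I * ω * ((t : ℂ) + δt₂ / 2)
      = Complex.I * ω * t + ((ω * δt₂ / 2 : ℝ) : ℂ) * Complex.I := by push_cast; ring
  have e2 : -(Complex.I * ω * ((t : ℂ) + δt₂ / 2))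
      = -(Complex.I * ω * t) + ((-(ω * δt₂ / 2) : ℝ) : ℂ) * Complex.I := by push_cast; ring
  have e3 : Complex.I * ω * ((t : ℂ) - δt₁ / 2)
      = Complex.I * ω * t + ((-(ω * δt₁ / 2) : ℝ) : ℂ) * Complex.I := by push_cast; ring
  have e4 : -(Complex.I * ω * ((t : ℂ) - δt₁ / 2))
      = -(Complex.I * ω * t) + ((ω * δt₁ / 2 : ℝ) : ℂ) * Complex.I := by push_cast; ring
  rw [e2, e1, e4, e3, key, key2, key, key2]
  simp only [Real.cos_neg, Real.sin_neg]
  simp only [Complex.ofReal_mul, Complex.ofReal_div, Complex.ofReal_add,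
    Complex.ofReal_sub, Complex.ofReal_one, Complex.ofReal_ofNat, Complex.ofReal_neg]
  revert hcos' hsum'
  generalize Complex.exp (Complex.I * ω * t) = E
  generalize Complex.exp (-(Complex.I * ω * t)) = F
  generalize ((Real.cos (ω * δt₂ / 2) : ℝ) : ℂ) = c2
  generalize ((Real.sin (ω * δt₂ / 2) : ℝ) : ℂ) = s2
  generalize ((Real.sin (ω * δt₁ / 2) : ℝ) : ℂ) = s1
  generalize ((Real.cos (ω * δt₁ / 2) : ℝ) : ℂ) = c1
  generalize ((δt₁ : ℂ) + (δt₂ : ℂ)) = S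
  intro hS hc1
  have r1 : 2 / S * (s2 / (ω : ℂ) + s1 / (ω : ℂ) * (c2 / c1)) * (Complex.I * ω * (A * E - B * F))
      = 2 * (s2 * c1 + s1 * c2) * Complex.I * (A * E - B * F) / (S * c1) := by
    field_simp
  have r2 : 2 / S * (c2 / c1 - 1) * (A * (E * (c1 + -s1 * Complex.I)) + B * (F * (c1 + s1 * Complex.I)))
      = 2 * (c2 - c1) * (A * (E * (c1 + -s1 * Complex.I)) + B * (F * (c1 + s1 * Complex.I))) / (S * c1) := by
    field_simp
  rw [r1, r2, ← add_div, div_eq_div_iff hS (mul_ne_zero hS hc1)]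
  ring
end

section
/- Let ω be a nonzero real number and δt₁, δt₂ real numbers with δt₁ + δt₂ ≠ 0 and cos(ωδt₁/2) ≠ 0. Suppose κ₁, κ₂ are complex numbers such that for all complex numbers A, B and all real t, with f(t) = A·exp(iωt) + B·exp(−iωt), the identity 2(f(t + δt₂/2) − f(t − δt₁/2))/(δt₁ + δt₂) = κ₁·f′(t) + κ₂·f(t − δt₁/2) holds. Then necessarily κ₁ = (2/(δt₁ + δt₂))·(sin(ωδt₂/2)/ω + (sin(ωδt₁/2)/ω)·(cos(ωδt₂/2)/cos(ωδt₁/2))) and κ₂ = (2/(δt₁ + δt₂))·(cos(ωδt₂/2)/cos(ωδt₁/2) − 1). -/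
open Complex Real

lemma expI_aux (x : ℝ) : Complex.exp (Complex.I * x) = Real.cos x + Real.sin x * Complex.I := by
  rw [mul_comm, Complex.exp_mul_I]
  push_cast
  ring

lemma expI_aux' (x : ℝ) : Complex.exp (-(Complex.I * x)) = Real.cos x - Real.sin x * Complex.I := by
  have h : -(Complex.I * (x:ℂ)) = Complex.I * ((-x : ℝ) : ℂ) := by push_cast; ring
  rw [h, expI_aux, Real.cos_neg, Real.sin_neg]
  push_cast
  ring

theorem staggered_kspace_corrections_unique
    (ω δt₁ δt₂ : ℝ) (hω : ω ≠ 0) (hsum : δt₁ + δt₂ ≠ 0)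
    (hcos : Real.cos (ω * δt₁ / 2) ≠ 0) (κ₁ κ₂ : ℂ)
    (h : ∀ A B : ℂ, ∀ t : ℝ,
      2 * ((A * Complex.exp (Complex.I * ω * (t + δt₂ / 2))
              + B * Complex.exp (-(Complex.I * ω * (t + δt₂ / 2))))
          - (A * Complex.exp (Complex.I * ω * (t - δt₁ / 2))
              + B * Complex.exp (-(Complex.I * ω * (t - δt₁ / 2))))) / ((δt₁ : ℂ) + δt₂)
        = κ₁ * (Complex.I * ω * (A * Complex.exp (Complex.I * ω * t)
                - B * Complex.exp (-(Complex.I * ω * t))))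
          + κ₂ * (A * Complex.exp (Complex.I * ω * (t - δt₁ / 2))
                + B * Complex.exp (-(Complex.I * ω * (t - δt₁ / 2))))) :
    κ₁ = (((2 / (δt₁ + δt₂)) * (Real.sin (ω * δt₂ / 2) / ω
              + (Real.sin (ω * δt₁ / 2) / ω) * (Real.cos (ω * δt₂ / 2) / Real.cos (ω * δt₁ / 2))) : ℝ) : ℂ)
    ∧ κ₂ = (((2 / (δt₁ + δt₂)) * (Real.cos (ω * δt₂ / 2) / Real.cos (ω * δt₁ / 2) - 1) : ℝ) : ℂ) := by
  have h1 := h 1 0 0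
  have h2 := h 0 1 0
  have ea : Complex.I * (ω:ℂ) * (((0:ℝ):ℂ) + (δt₂:ℂ) / 2)
      = Complex.I * ((ω * δt₂ / 2 : ℝ) : ℂ) := by push_cast; ring
  have eb : Complex.I * (ω:ℂ) * (((0:ℝ):ℂ) - (δt₁:ℂ) / 2)
      = -(Complex.I * ((ω * δt₁ / 2 : ℝ) : ℂ)) := by push_cast; ring
  have ec : Complex.I * (ω:ℂ) * (((0:ℝ):ℂ)) = 0 := by push_cast; ring
  rw [ea, eb, ec] at h1 h2
  simp only [neg_neg, neg_zero, Complex.exp_zero, expI_aux, expI_aux'] at h1 h2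
  have sc : ((δt₁:ℂ) + δt₂) ≠ 0 := by
    intro hx; apply hsum; exact_mod_cast (by exact_mod_cast hx : ((δt₁ + δt₂ : ℝ):ℂ) = 0)
  have cc : ((Real.cos (ω * δt₁ / 2) : ℝ) : ℂ) ≠ 0 := by exact_mod_cast hcos
  have ωc : (ω : ℂ) ≠ 0 := by exact_mod_cast hω
  have cc' : Complex.cos ((ω:ℂ) * (δt₁:ℂ) / 2) ≠ 0 := by
    push_cast at cc; exact cc
  field_simp at h1 h2
  constructor
  · simp only [Complex.ofReal_mul, Complex.ofReal_div, Complex.ofReal_add, Complex.ofReal_sub, Complex.ofReal_one, Complex.ofReal_ofNat]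
    field_simp [cc]
    have e1 : (((δt₁:ℂ) + δt₂) * (κ₁ * ω - ((Real.sin (ω * δt₁ / 2) : ℝ) : ℂ) * κ₂) - 2 * (((Real.sin (ω * δt₁ / 2) : ℝ) : ℂ) + ((Real.sin (ω * δt₂ / 2) : ℝ) : ℂ))) = 0 := by
      linear_combination (Complex.I / 2) * (h1 - h2) + (((δt₁:ℂ) + δt₂) * (κ₁ * ω - ((Real.sin (ω * δt₁ / 2) : ℝ) : ℂ) * κ₂) - 2 * (((Real.sin (ω * δt₁ / 2) : ℝ) : ℂ) + ((Real.sin (ω * δt₂ / 2) : ℝ) : ℂ))) * Complex.I_sq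
    have e2 : ((δt₁:ℂ) + δt₂) * ((Real.cos (ω * δt₁ / 2) : ℝ) : ℂ) * κ₂ - 2 * (((Real.cos (ω * δt₂ / 2) : ℝ) : ℂ) - ((Real.cos (ω * δt₁ / 2) : ℝ) : ℂ)) = 0 := by
      linear_combination (-1/2 : ℂ) * (h1 + h2)
    linear_combination ((Real.cos (ω * δt₁ / 2) : ℝ) : ℂ) * e1 + ((Real.sin (ω * δt₁ / 2) : ℝ) : ℂ) * e2
  · simp only [Complex.ofReal_mul, Complex.ofReal_div, Complex.ofReal_add, Complex.ofReal_sub, Complex.ofReal_one, Complex.ofReal_ofNat]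
    field_simp [cc]
    linear_combination (-1/2 : ℂ) * (h1 + h2)
end

section
/- Let ω be a nonzero real number, δt₁ a real number, and t a real number. For complex numbers A, B let f(t) = A·exp(iωt) + B·exp(−iωt). The linear map ℂ² → ℂ² sending (A, B) to (f′(t), f(t − δt₁/2)) is injective (equivalently, bijective) if and only if cos(ωδt₁/2) ≠ 0; its determinant equals 2iω·cos(ωδt₁/2). In particular, when cos(ωδt₁/2) ≠ 0 the values f′(t) and f(t − δt₁/2) determine the solution f uniquely, i.e. they span the two-dimensional solution space of f″ = −ω²f. -/
open Complex Real

theorem deriv_and_past_value_span_solution_space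
    (ω δt₁ t : ℝ) (hω : ω ≠ 0) :
    (Function.Injective (fun AB : ℂ × ℂ =>
        (Complex.I * ω * (AB.1 * Complex.exp (Complex.I * ω * t)
            - AB.2 * Complex.exp (-(Complex.I * ω * t))),
         AB.1 * Complex.exp (Complex.I * ω * (t - δt₁ / 2))
            + AB.2 * Complex.exp (-(Complex.I * ω * (t - δt₁ / 2)))))
      ↔ Real.cos (ω * δt₁ / 2) ≠ 0) ∧
    (Function.Bijective (fun AB : ℂ × ℂ =>
        (Complex.I * ω * (AB.1 * Complex.exp (Complex.I * ω * t)
            - AB.2 * Complex.exp (-(Complex.I * ω * t))),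
         AB.1 * Complex.exp (Complex.I * ω * (t - δt₁ / 2))
            + AB.2 * Complex.exp (-(Complex.I * ω * (t - δt₁ / 2)))))
      ↔ Real.cos (ω * δt₁ / 2) ≠ 0) ∧
    Matrix.det !![Complex.I * ω * Complex.exp (Complex.I * ω * t),
                  -(Complex.I * ω * Complex.exp (-(Complex.I * ω * t)));
                  Complex.exp (Complex.I * ω * (t - δt₁ / 2)),
                  Complex.exp (-(Complex.I * ω * (t - δt₁ / 2)))]
      = 2 * Complex.I * ω * (Real.cos (ω * δt₁ / 2) : ℂ) := by
  have hIω : (Complex.I * (ω : ℂ)) ≠ 0 := by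
    simp [Complex.I_ne_zero, Complex.ofReal_ne_zero, hω]
  set e1 := Complex.exp (Complex.I * ω * t) with he1
  set e2 := Complex.exp (-(Complex.I * ω * t)) with he2
  set e3 := Complex.exp (Complex.I * ω * (t - δt₁/2)) with he3
  set e4 := Complex.exp (-(Complex.I * ω * (t - δt₁/2))) with he4
  have h1 : e1 ≠ 0 := Complex.exp_ne_zero _
  have h2 : e2 ≠ 0 := Complex.exp_ne_zero _
  have h3 : e3 ≠ 0 := Complex.exp_ne_zero _
  have h4 : e4 ≠ 0 := Complex.exp_ne_zero _
  have hcos : e1 * e4 + e2 * e3 = 2 * (Real.cos (ω * δt₁ / 2) : ℂ) := by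
    rw [he1, he2, he3, he4, ← Complex.exp_add, ← Complex.exp_add,
      Complex.ofReal_cos, Complex.cos]
    push_cast
    ring_nf
  have hinj : Function.Injective (fun AB : ℂ × ℂ =>
        (Complex.I * ω * (AB.1 * e1 - AB.2 * e2), AB.1 * e3 + AB.2 * e4))
      ↔ Real.cos (ω * δt₁ / 2) ≠ 0 := by
    constructor
    · intro hinj hc
      have hc0 : e1 * e4 + e2 * e3 = 0 := by
        rw [hcos, hc]; simp
      have := hinj (a₁ := (e4, -e3)) (a₂ := (0, 0)) (by
        simp only [Prod.mk.injEq]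
        constructor
        · ring_nf
          linear_combination Complex.I * (ω : ℂ) * hc0
        · ring)
      exact h4 (by simpa using congrArg Prod.fst this)
    · intro hc
      have hc0 : (2 * (Real.cos (ω * δt₁ / 2) : ℂ)) ≠ 0 :=
        mul_ne_zero two_ne_zero (Complex.ofReal_ne_zero.mpr hc)
      intro a b hab
      have hu := congrArg Prod.fst hab
      have hv := congrArg Prod.snd hab
      simp only at hu hv
      have hu' : a.1 * e1 - a.2 * e2 = b.1 * e1 - b.2 * e2 :=
        mul_left_cancel₀ hIω hu
      have key : (a.1 - b.1) * (e1 * e4 + e2 * e3) = 0 := by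
        linear_combination e4 * hu' + e2 * hv
      have ha1 : a.1 = b.1 := by
        rw [hcos] at key
        have := mul_eq_zero.mp key
        rcases this with h | h
        · exact sub_eq_zero.mp h
        · exact absurd h hc0
      have ha2 : a.2 = b.2 := by
        rw [ha1] at hv
        have h' : a.2 * e4 = b.2 * e4 := by linear_combination hv
        exact mul_right_cancel₀ h4 h'
      exact Prod.ext ha1 ha2
  refine ⟨hinj, ⟨fun h => hinj.mp h.injective, fun hc => ⟨hinj.mpr hc, ?_⟩⟩, ?_⟩
  · -- surjectivity
    rintro ⟨u, v⟩
    have hc0 : (2 * (Real.cos (ω * δt₁ / 2) : ℂ)) ≠ 0 :=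
      mul_ne_zero two_ne_zero (Complex.ofReal_ne_zero.mpr hc)
    set c : ℂ := 2 * (Real.cos (ω * δt₁ / 2) : ℂ) with hcdef
    refine ⟨((u * e4 + Complex.I * ω * v * e2) / (Complex.I * ω * c),
            (Complex.I * ω * v * e1 - u * e3) / (Complex.I * ω * c)), ?_⟩
    have hIωc : Complex.I * (ω : ℂ) * c ≠ 0 := mul_ne_zero hIω hc0
    have hω' : (ω : ℂ) ≠ 0 := by exact_mod_cast hω
    simp only [Prod.mk.injEq]
    constructor
    · field_simp
      linear_combination u * hcos
    · field_simp
      linear_combination Complex.I * ω * v * hcos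
  · simp only [Matrix.det_fin_two_of]
    linear_combination Complex.I * (ω : ℂ) * hcos
end

section
/- Let ω be a positive real number, α and β nonzero complex numbers with α·β = −ω², and v, p : ℝ → ℂ differentiable functions satisfying v′(t) = α·p(t) and p′(t) = β·v(t) for all real t. Let δt₁, δt₂ be real numbers with δt₁ + δt₂ ≠ 0 and cos(ωδt₁/2) ≠ 0, and let κ₁ = (2/(δt₁ + δt₂))·(sin(ωδt₂/2)/ω + (sin(ωδt₁/2)/ω)·(cos(ωδt₂/2)/cos(ωδt₁/2))) and κ₂ = (2/(δt₁ + δt₂))·(cos(ωδt₂/2)/cos(ωδt₁/2) − 1). Then for every real t, v(t + δt₂/2) = v(t − δt₁/2) + ((δt₁ + δt₂)/2)·(κ₁·α·p(t) + κ₂·v(t − δt₁/2)); i.e. the non-uniform-step velocity update equation is exact for the per-mode acoustic system. -/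
open Complex Real

private lemma exact_sol (ω : ℝ) (hω : ω ≠ 0) (α β : ℂ)
    (hαβ : α * β = -(ω : ℂ) ^ 2)
    (v p : ℝ → ℂ) (hv : Differentiable ℝ v) (hp : Differentiable ℝ p)
    (hv' : ∀ t : ℝ, deriv v t = α * p t) (hp' : ∀ t : ℝ, deriv p t = β * v t)
    (t s : ℝ) :
    v (t + s) = ((Real.cos (ω * s) : ℝ) : ℂ) * v t
      + (((Real.sin (ω * s) / ω : ℝ)) : ℂ) * (α * p t) := by
  have hωC : (ω : ℂ) ≠ 0 := Complex.ofReal_ne_zero.mpr hω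
  -- derivative facts
  have hvd : ∀ u : ℝ, HasDerivAt (fun u : ℝ => v (t + u)) (α * p (t + u)) u := by
    intro u
    have h2 := ((hv (t + u)).hasDerivAt).comp_const_add t u
    simpa [hv'] using h2
  have hpd : ∀ u : ℝ, HasDerivAt (fun u : ℝ => α * p (t + u)) (α * (β * v (t + u))) u := by
    intro u
    have h2 := ((hp (t + u)).hasDerivAt).comp_const_add t u
    have h3 : HasDerivAt (fun u : ℝ => p (t + u)) (β * v (t + u)) u := by
      simpa [hp'] using h2
    simpa [mul_assoc] using h3.const_mul α
  have hcosd : ∀ u : ℝ, HasDerivAt (fun u : ℝ => Complex.cos ((ω : ℂ) * (u : ℂ)))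
      (-Complex.sin ((ω : ℂ) * (u : ℂ)) * ω) u := by
    intro u
    have h1 : HasDerivAt (fun z : ℂ => Complex.cos ((ω : ℂ) * z))
        (-Complex.sin ((ω : ℂ) * (u : ℂ)) * ω) (u : ℂ) := by
      convert (Complex.hasDerivAt_cos ((ω : ℂ) * u)).comp (u : ℂ)
        ((hasDerivAt_id (u : ℂ)).const_mul (ω : ℂ)) using 1
      · rfl
      · rfl
      · rfl
      · simp
    exact h1.comp_ofReal
  have hsind : ∀ u : ℝ, HasDerivAt (fun u : ℝ => Complex.sin ((ω : ℂ) * (u : ℂ)))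
      (Complex.cos ((ω : ℂ) * (u : ℂ)) * ω) u := by
    intro u
    have h1 : HasDerivAt (fun z : ℂ => Complex.sin ((ω : ℂ) * z))
        (Complex.cos ((ω : ℂ) * (u : ℂ)) * ω) (u : ℂ) := by
      convert (Complex.hasDerivAt_sin ((ω : ℂ) * u)).comp (u : ℂ)
        ((hasDerivAt_id (u : ℂ)).const_mul (ω : ℂ)) using 1
      · rfl
      · rfl
      · rfl
      · simp
    exact h1.comp_ofReal
  set A : ℝ → ℂ := fun u => Complex.cos ((ω : ℂ) * u) * v (t + u)
      - Complex.sin ((ω : ℂ) * u) / ω * (α * p (t + u)) with hAdef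
  set B : ℝ → ℂ := fun u => Complex.sin ((ω : ℂ) * u) * v (t + u)
      + Complex.cos ((ω : ℂ) * u) / ω * (α * p (t + u)) with hBdef
  have hA : ∀ u : ℝ, HasDerivAt A 0 u := by
    intro u
    have d := (((hcosd u).mul (hvd u)).sub (((hsind u).div_const (ω : ℂ)).mul (hpd u)))
    have e0 : -Complex.sin ((ω : ℂ) * u) * ω * v (t + u)
        + Complex.cos ((ω : ℂ) * u) * (α * p (t + u))
        - (Complex.cos ((ω : ℂ) * u) * ω / ω * (α * p (t + u))
          + Complex.sin ((ω : ℂ) * u) / ω * (α * (β * v (t + u)))) = 0 := by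
      rw [show α * (β * v (t + u)) = -(ω : ℂ) ^ 2 * v (t + u) by rw [← mul_assoc, hαβ]]
      field_simp
      ring
    exact e0 ▸ d
  have hB : ∀ u : ℝ, HasDerivAt B 0 u := by
    intro u
    have d := (((hsind u).mul (hvd u)).add (((hcosd u).div_const (ω : ℂ)).mul (hpd u)))
    have e0 : Complex.cos ((ω : ℂ) * u) * ω * v (t + u)
        + Complex.sin ((ω : ℂ) * u) * (α * p (t + u))
        + (-Complex.sin ((ω : ℂ) * u) * ω / ω * (α * p (t + u))
          + Complex.cos ((ω : ℂ) * u) / ω * (α * (β * v (t + u)))) = 0 := by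
      rw [show α * (β * v (t + u)) = -(ω : ℂ) ^ 2 * v (t + u) by rw [← mul_assoc, hαβ]]
      field_simp
      ring
    exact e0 ▸ d
  have hAc : A s = A 0 :=
    is_const_of_deriv_eq_zero (fun x => (hA x).differentiableAt) (fun x => (hA x).deriv) s 0
  have hBc : B s = B 0 :=
    is_const_of_deriv_eq_zero (fun x => (hB x).differentiableAt) (fun x => (hB x).deriv) s 0
  have hA0 : A 0 = v t := by simp [hAdef]
  have hB0 : B 0 = α * p t / ω := by simp [hBdef]; ring
  have key : Complex.cos ((ω : ℂ) * s) * A s + Complex.sin ((ω : ℂ) * s) * B s = v (t + s) := by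
    simp only [hAdef, hBdef]
    have := Complex.cos_sq_add_sin_sq ((ω : ℂ) * s)
    linear_combination (v (t + s)) * this
  rw [Complex.ofReal_div, Complex.ofReal_sin, Complex.ofReal_cos, Complex.ofReal_mul,
    ← key, hAc, hBc, hA0, hB0]
  field_simp

theorem nonuniform_velocity_update_exact
    (ω : ℝ) (hω : 0 < ω) (α β : ℂ) (hα : α ≠ 0) (hβ : β ≠ 0)
    (hαβ : α * β = -(ω : ℂ) ^ 2)
    (v p : ℝ → ℂ) (hv : Differentiable ℝ v) (hp : Differentiable ℝ p)
    (hv' : ∀ t : ℝ, deriv v t = α * p t) (hp' : ∀ t : ℝ, deriv p t = β * v t)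
    (δt₁ δt₂ : ℝ) (hsum : δt₁ + δt₂ ≠ 0) (hcos : Real.cos (ω * δt₁ / 2) ≠ 0) :
    ∀ t : ℝ,
      v (t + δt₂ / 2) = v (t - δt₁ / 2)
        + (((δt₁ + δt₂) / 2 : ℝ) : ℂ)
          * ((((2 / (δt₁ + δt₂)) * (Real.sin (ω * δt₂ / 2) / ω
                + (Real.sin (ω * δt₁ / 2) / ω)
                  * (Real.cos (ω * δt₂ / 2) / Real.cos (ω * δt₁ / 2))) : ℝ) : ℂ) * α * p t
            + (((2 / (δt₁ + δt₂)) * (Real.cos (ω * δt₂ / 2) / Real.cos (ω * δt₁ / 2) - 1) : ℝ) : ℂ)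
              * v (t - δt₁ / 2)) := by
  intro t
  have hω' : ω ≠ 0 := ne_of_gt hω
  have e2 := exact_sol ω hω' α β hαβ v p hv hp hv' hp' t (δt₂ / 2)
  have e1 := exact_sol ω hω' α β hαβ v p hv hp hv' hp' t (-(δt₁ / 2))
  rw [show ω * (δt₂ / 2) = ω * δt₂ / 2 by ring] at e2
  rw [show ω * -(δt₁ / 2) = -(ω * δt₁ / 2) by ring, Real.cos_neg, Real.sin_neg,
    show t + -(δt₁ / 2) = t - δt₁ / 2 by ring] at e1
  set c1 : ℝ := Real.cos (ω * δt₁ / 2) with hc1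
  set s1 : ℝ := Real.sin (ω * δt₁ / 2) with hs1
  set c2 : ℝ := Real.cos (ω * δt₂ / 2) with hc2
  set s2 : ℝ := Real.sin (ω * δt₂ / 2) with hs2
  set A : ℝ := (δt₁ + δt₂) / 2 with hA
  set B : ℝ := 2 / (δt₁ + δt₂) * (s2 / ω + s1 / ω * (c2 / c1)) with hB
  set C : ℝ := 2 / (δt₁ + δt₂) * (c2 / c1 - 1) with hC
  rw [e1, e2]
  have hV : c2 = c1 + A * (C * c1) := by
    rw [hA, hC]
    field_simp
    ring
  have hP : s2 / ω = -s1 / ω + (A * B + A * C * (-s1 / ω)) := by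
    rw [hA, hB, hC]
    field_simp
    ring
  have hVC : (c2 : ℂ) = (c1 : ℂ) + (A : ℂ) * ((C : ℂ) * (c1 : ℂ)) := by exact_mod_cast hV
  have hPC : (s2 : ℂ) / (ω : ℂ)
      = -(s1 : ℂ) / (ω : ℂ) + ((A : ℂ) * (B : ℂ)
        + (A : ℂ) * (C : ℂ) * (-(s1 : ℂ) / (ω : ℂ))) := by exact_mod_cast hP
  push_cast
  linear_combination (v t) * hVC + (α * p t) * hPC
end

section
/- Let ω be a positive real number, α and β nonzero complex numbers with α·β = −ω², and v, p : ℝ → ℂ differentiable functions satisfying v′(t) = α·p(t) and p′(t) = β·v(t) for all real t. Let δt be a nonzero real number and κ = 2 sin(ωδt/2)/(ωδt). Then for every real t, p(t + δt) = p(t) + δt·κ·β·v(t + δt/2); i.e. the k-space-corrected staggered pressure update equation is exact for the per-mode acoustic system, for any size of time step. -/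
open Complex Real

lemma exp_ode_solution (c : ℂ) (u : ℝ → ℂ) (hu : Differentiable ℝ u)
    (h : ∀ t, deriv u t = c * u t) : ∀ t : ℝ, u t = u 0 * Complex.exp (c * t) := by
  have hexp : ∀ t : ℝ, HasDerivAt (fun s : ℝ => Complex.exp (-c * s))
      (-c * Complex.exp (-c * t)) t := by
    intro t
    have h1 : HasDerivAt (fun s : ℝ => (-c) * (s : ℂ)) (-c) t := by
      simpa using (Complex.ofRealCLM.hasDerivAt (x := t)).const_mul (-c)
    simpa [mul_comm] using h1.cexp
  have hc : ∀ t : ℝ, HasDerivAt (fun s => u s * Complex.exp (-c * s)) 0 t := by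
    intro t
    have hut : HasDerivAt u (c * u t) t := by
      have := (hu t).hasDerivAt
      rwa [h t] at this
    have hmul := hut.mul (hexp t)
    have heq : c * u t * Complex.exp (-c * ↑t) + u t * (-c * Complex.exp (-c * ↑t)) = 0 := by
      ring
    rwa [heq] at hmul
  have hdiff : Differentiable ℝ (fun s : ℝ => u s * Complex.exp (-c * s)) :=
    fun s => (hc s).differentiableAt
  have hconst := is_const_of_deriv_eq_zero hdiff (fun s => (hc s).deriv)
  intro t
  have h0 := hconst t 0
  simp only [Complex.ofReal_zero, mul_zero, Complex.exp_zero, mul_one] at h0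
  rw [← h0, mul_assoc, ← Complex.exp_add]
  simp

lemma kappa_factor (X Y I ω δt β : ℂ) (hI : I ≠ 0) (hω : ω ≠ 0) (hδt : δt ≠ 0) (hβ : β ≠ 0) :
    δt * (2 * (X / (2 * I)) / (ω * δt)) * β * (Y / (2 * β)) = X * Y / (2 * I * ω) := by
  field_simp

theorem kspace_pressure_update_exact
    (ω : ℝ) (hω : 0 < ω) (α β : ℂ) (hα : α ≠ 0) (hβ : β ≠ 0)
    (hαβ : α * β = -(ω : ℂ) ^ 2)
    (v p : ℝ → ℂ) (hv : Differentiable ℝ v) (hp : Differentiable ℝ p)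
    (hv' : ∀ t : ℝ, deriv v t = α * p t) (hp' : ∀ t : ℝ, deriv p t = β * v t)
    (δt : ℝ) (hδt : δt ≠ 0) :
    ∀ t : ℝ,
      p (t + δt) = p t
        + (δt : ℂ) * ((2 * Real.sin (ω * δt / 2) / (ω * δt) : ℝ) : ℂ) * β * v (t + δt / 2) := by
  intro t
  have hωC : (ω : ℂ) ≠ 0 := by exact_mod_cast hω.ne'
  have hδtC : (δt : ℂ) ≠ 0 := by exact_mod_cast hδt
  set up : ℝ → ℂ := fun s => β * v s + Complex.I * ω * p s with hup
  set um : ℝ → ℂ := fun s => β * v s - Complex.I * ω * p s with hum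
  have hupd : Differentiable ℝ up := ((hv.const_mul β).add (hp.const_mul _))
  have humd : Differentiable ℝ um := ((hv.const_mul β).sub (hp.const_mul _))
  have hupderiv : ∀ s, deriv up s = (Complex.I * ω) * up s := by
    intro s
    have hd : deriv up s = β * deriv v s + Complex.I * ω * deriv p s := by
      rw [hup]
      rw [deriv_fun_add ((hv s).const_mul β) ((hp s).const_mul _),
        deriv_const_mul _ (hv s), deriv_const_mul _ (hp s)]
    rw [hd, hv' s, hp' s]
    simp only [hup]
    linear_combination (p s) * hαβ - (ω:ℂ)^2 * (p s) * Complex.I_sq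
  have humderiv : ∀ s, deriv um s = (-(Complex.I * ω)) * um s := by
    intro s
    have hd : deriv um s = β * deriv v s - Complex.I * ω * deriv p s := by
      rw [hum]
      rw [deriv_fun_sub ((hv s).const_mul β) ((hp s).const_mul _),
        deriv_const_mul _ (hv s), deriv_const_mul _ (hp s)]
    rw [hd, hv' s, hp' s]
    simp only [hum]
    linear_combination (p s) * hαβ - (ω:ℂ)^2 * (p s) * Complex.I_sq
  have hupsol := exp_ode_solution _ up hupd hupderiv
  have humsol := exp_ode_solution _ um humd humderiv
  -- recover p and v
  have hps : ∀ s : ℝ, p s = (up s - um s) / (2 * Complex.I * ω) := by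
    intro s
    simp only [hup, hum]
    field_simp
    ring
  have hvs : ∀ s : ℝ, v s = (up s + um s) / (2 * β) := by
    intro s
    simp only [hup, hum]
    field_simp
    ring
  set A := up 0 with hA
  set B := um 0 with hB
  set w : ℂ := Complex.I * ω * t with hw
  set d : ℂ := Complex.I * ω * (δt / 2) with hd
  have e1 : Complex.I * (ω : ℂ) * ((t + δt : ℝ) : ℂ) = w + (d + d) := by
    rw [hw, hd]; push_cast; ring
  have e2 : Complex.I * (ω : ℂ) * ((t + δt / 2 : ℝ) : ℂ) = w + d := by
    rw [hw, hd]; push_cast; ring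
  have E1 : p (t + δt)
      = (A * (Complex.exp w * (Complex.exp d * Complex.exp d))
        - B * (Complex.exp w * (Complex.exp d * Complex.exp d))⁻¹) / (2 * Complex.I * ω) := by
    rw [hps (t + δt), hupsol (t + δt), humsol (t + δt), neg_mul, Complex.exp_neg, e1,
      Complex.exp_add, Complex.exp_add]
  have E2 : p t = (A * Complex.exp w - B * (Complex.exp w)⁻¹) / (2 * Complex.I * ω) := by
    rw [hps t, hupsol t, humsol t, neg_mul, Complex.exp_neg, hw]
  have E3 : v (t + δt / 2)
      = (A * (Complex.exp w * Complex.exp d)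
        + B * (Complex.exp w * Complex.exp d)⁻¹) / (2 * β) := by
    rw [hvs (t + δt / 2), hupsol (t + δt / 2), humsol (t + δt / 2), neg_mul, Complex.exp_neg, e2,
      Complex.exp_add]
  have hsin : Complex.sin ((ω : ℂ) * (δt : ℂ) / 2)
      = (Complex.exp d - (Complex.exp d)⁻¹) / (2 * Complex.I) := by
    show (Complex.exp (-((ω : ℂ) * (δt : ℂ) / 2) * Complex.I)
      - Complex.exp ((ω : ℂ) * (δt : ℂ) / 2 * Complex.I)) * Complex.I / 2 = _
    have a1 : (ω : ℂ) * (δt : ℂ) / 2 * Complex.I = d := by rw [hd]; ring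
    have a2 : -((ω : ℂ) * (δt : ℂ) / 2) * Complex.I = -d := by rw [hd]; ring
    rw [a1, a2, Complex.exp_neg]
    have hEd : Complex.exp d ≠ 0 := Complex.exp_ne_zero d
    have hI : Complex.I ≠ 0 := Complex.I_ne_zero
    field_simp
    linear_combination (1 - Complex.exp d ^ 2) * Complex.I_sq
  rw [E1, E2, E3]
  push_cast
  rw [hsin]
  have hEw : Complex.exp w ≠ 0 := Complex.exp_ne_zero w
  have hEd : Complex.exp d ≠ 0 := Complex.exp_ne_zero d
  have hI : Complex.I ≠ 0 := Complex.I_ne_zero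
  clear_value A B w d
  have hc : (2 * Complex.I * (ω : ℂ)) ≠ 0 := by
    simp [Complex.I_ne_zero, hωC]
  rw [kappa_factor (Complex.exp d - (Complex.exp d)⁻¹)
      (A * (Complex.exp w * Complex.exp d) + B * (Complex.exp w * Complex.exp d)⁻¹)
      Complex.I ω δt β hI hωC hδtC hβ,
    ← add_div, div_eq_div_iff hc hc]
  field_simp
  ring
end

section
/- Let ω be a positive real number, α and β nonzero complex numbers with α·β = −ω², and v, p : ℝ → ℂ differentiable functions satisfying v′(t) = α·p(t) and p′(t) = β·v(t) for all real t. Fix a nonzero time step δt and let κ = 2 sin(ωδt/2)/(ωδt). Define sequences (Pₙ), (Vₙ) of complex numbers by P₀ = p(0), V₀ = v(δt/2), and for n ≥ 0: Pₙ₊₁ = Pₙ + δt·κ·β·Vₙ and Vₙ₊₁ = Vₙ + δt·κ·α·Pₙ₊₁. Then for all natural numbers n, Pₙ = p(n·δt) and Vₙ = v(n·δt + δt/2); i.e. the uniform-step staggered k-space scheme reproduces the exact per-mode solution at every time step, for any size of time step. -/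
open Complex Real

/-- Solution of the scalar linear ODE `f' = c f`. -/
lemma solve_lin_ode (c : ℂ) (f : ℝ → ℂ) (hf : Differentiable ℝ f)
    (hf' : ∀ t, deriv f t = c * f t) :
    ∀ t : ℝ, f t = f 0 * Complex.exp (c * t) := by
  have key : ∀ t : ℝ, f t * Complex.exp (-(c * t)) = f 0 := by
    have hd : ∀ t : ℝ, HasDerivAt (fun s : ℝ => f s * Complex.exp (-(c * s))) 0 t := by
      intro t
      have h1 : HasDerivAt (fun z : ℂ => Complex.exp (-(c * z)))
          (-c * Complex.exp (-(c * (t : ℂ)))) t := by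
        have h0 : HasDerivAt (fun z : ℂ => -(c * z)) (-c) (t : ℂ) := by
          simpa using ((hasDerivAt_id (t : ℂ)).const_mul c).fun_neg
        simpa [mul_comm] using h0.cexp
      have h1' : HasDerivAt (fun s : ℝ => Complex.exp (-(c * (s : ℂ))))
          (-c * Complex.exp (-(c * (t : ℂ)))) t := h1.comp_ofReal
      have h2 : HasDerivAt f (deriv f t) t := (hf t).hasDerivAt
      have := h2.fun_mul h1'
      refine this.congr_deriv ?_
      rw [hf' t]; ring
    intro t
    have hdf : Differentiable ℝ (fun s : ℝ => f s * Complex.exp (-(c * s))) :=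
      fun s => (hd s).differentiableAt
    have hz : ∀ s : ℝ, deriv (fun s : ℝ => f s * Complex.exp (-(c * s))) s = 0 :=
      fun s => (hd s).deriv
    exact (is_const_of_deriv_eq_zero hdf hz t 0).trans (by simp)
  intro t
  calc f t = f t * Complex.exp (-(c * t)) * Complex.exp (c * t) := by
        rw [mul_assoc, ← Complex.exp_add]; simp
    _ = f 0 * Complex.exp (c * t) := by rw [key t]

theorem uniform_kspace_scheme_exact
    (ω : ℝ) (hω : 0 < ω) (α β : ℂ) (hα : α ≠ 0) (hβ : β ≠ 0)
    (hαβ : α * β = -(ω : ℂ) ^ 2)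
    (v p : ℝ → ℂ) (hv : Differentiable ℝ v) (hp : Differentiable ℝ p)
    (hv' : ∀ t : ℝ, deriv v t = α * p t) (hp' : ∀ t : ℝ, deriv p t = β * v t)
    (δt : ℝ) (hδt : δt ≠ 0)
    (κ : ℝ) (hκ : κ = 2 * Real.sin (ω * δt / 2) / (ω * δt))
    (P V : ℕ → ℂ) (hP0 : P 0 = p 0) (hV0 : V 0 = v (δt / 2))
    (hPrec : ∀ n : ℕ, P (n + 1) = P n + (δt : ℂ) * (κ : ℂ) * β * V n)
    (hVrec : ∀ n : ℕ, V (n + 1) = V n + (δt : ℂ) * (κ : ℂ) * α * P (n + 1)) :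
    ∀ n : ℕ, P n = p (n * δt) ∧ V n = v (n * δt + δt / 2) := by
  have hωC : (ω : ℂ) ≠ 0 := by exact_mod_cast hω.ne'
  -- the diagonalising variables
  set u₁ : ℝ → ℂ := fun t => β * v t + Complex.I * ω * p t with hu₁def
  set u₂ : ℝ → ℂ := fun t => β * v t - Complex.I * ω * p t with hu₂def
  have hIω2 : (Complex.I * ω) * (Complex.I * ω) = -(ω : ℂ) ^ 2 := by
    ring_nf; rw [Complex.I_sq]; ring
  have hu₁ : ∀ t : ℝ, u₁ t = u₁ 0 * Complex.exp ((Complex.I * ω) * t) := by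
    apply solve_lin_ode
    · exact (hv.const_mul β).add (hp.const_mul _)
    · intro t
      have h1 : HasDerivAt u₁ (β * deriv v t + (Complex.I * ω) * deriv p t) t :=
        (((hv t).hasDerivAt).const_mul β).add (((hp t).hasDerivAt).const_mul _)
      rw [h1.deriv, hv' t, hp' t, hu₁def]
      have h3 : β * α = (Complex.I * ω) * (Complex.I * ω) := by rw [hIω2, ← hαβ]; ring
      simp only []
      linear_combination (p t) * h3
  have hu₂ : ∀ t : ℝ, u₂ t = u₂ 0 * Complex.exp (-(Complex.I * ω) * t) := by
    apply solve_lin_ode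
    · exact (hv.const_mul β).sub (hp.const_mul _)
    · intro t
      have h1 : HasDerivAt u₂ (β * deriv v t - (Complex.I * ω) * deriv p t) t :=
        (((hv t).hasDerivAt).const_mul β).sub (((hp t).hasDerivAt).const_mul _)
      rw [h1.deriv, hv' t, hp' t, hu₂def]
      have h3 : β * α = (Complex.I * ω) * (Complex.I * ω) := by rw [hIω2, ← hαβ]; ring
      simp only []
      linear_combination (p t) * h3
  set c₁ : ℂ := u₁ 0 with hc₁
  set c₂ : ℂ := u₂ 0 with hc₂
  set X : ℝ → ℂ := fun s => Complex.exp ((Complex.I * ω) * s) with hX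
  have hXadd : ∀ s r : ℝ, X (s + r) = X s * X r := by
    intro s r
    rw [hX]; simp only []
    rw [← Complex.exp_add]
    congr 1
    push_cast; ring
  have hXneg : ∀ s : ℝ, Complex.exp (-(Complex.I * ω) * s) = X (-s) := by
    intro s
    rw [hX]; simp only []
    congr 1
    push_cast; ring
  -- inverse-free closed forms
  have ep : ∀ t : ℝ, 2 * Complex.I * ω * p t = c₁ * X t - c₂ * X (-t) := by
    intro t
    have h1 := hu₁ t
    have h2 := hu₂ t
    rw [hu₁def] at h1
    rw [hu₂def] at h2
    rw [hXneg t] at h2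
    simp only [] at h1 h2
    linear_combination h1 - h2
  have ev : ∀ t : ℝ, 2 * β * v t = c₁ * X t + c₂ * X (-t) := by
    intro t
    have h1 := hu₁ t
    have h2 := hu₂ t
    rw [hu₁def] at h1
    rw [hu₂def] at h2
    rw [hXneg t] at h2
    simp only [] at h1 h2
    linear_combination h1 + h2
  set B : ℂ := X (δt / 2) with hBdef
  set B' : ℂ := X (-(δt / 2)) with hB'def
  have hBB : B * B' = 1 := by
    rw [hBdef, hB'def, ← hXadd]
    norm_num [hX]
  have hs : 2 * Complex.I * ((Real.sin (ω * δt / 2) : ℝ) : ℂ) = B - B' := by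
    have hXeqB : B = Complex.exp (((ω * δt / 2 : ℝ) : ℂ) * Complex.I) := by
      rw [hBdef, hX]; simp only []; congr 1; push_cast; ring
    have hXeqB' : B' = Complex.exp (-((ω * δt / 2 : ℝ) : ℂ) * Complex.I) := by
      rw [hB'def, hX]; simp only []; congr 1; push_cast; ring
    have h2 := Complex.two_sin ((ω * δt / 2 : ℝ) : ℂ)
    rw [Complex.ofReal_sin, hXeqB, hXeqB']
    linear_combination Complex.I * h2 +
      (Complex.exp (-((ω * δt / 2 : ℝ) : ℂ) * Complex.I) -
        Complex.exp (((ω * δt / 2 : ℝ) : ℂ) * Complex.I)) * Complex.I_sq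
  have hκc : ((ω : ℝ) : ℂ) * (δt : ℂ) * (κ : ℂ) = 2 * ((Real.sin (ω * δt / 2) : ℝ) : ℂ) := by
    have h : ω * δt * κ = 2 * Real.sin (ω * δt / 2) := by
      rw [hκ]; field_simp
    exact_mod_cast congrArg (fun x : ℝ => (x : ℂ)) h
  have h2Iω : (2 * Complex.I * (ω : ℂ)) ≠ 0 := by
    simp [Complex.I_ne_zero, hωC]
  -- the P-step identity
  have hE1 : ∀ t : ℝ, X (t + δt) = X t * B * B := by
    intro t
    rw [hBdef, ← hXadd, ← hXadd]
    congr 1; ring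
  have hE1' : ∀ t : ℝ, X (-(t + δt)) = X (-t) * B' * B' := by
    intro t
    rw [hB'def, ← hXadd, ← hXadd]
    congr 1; ring
  have hE2 : ∀ t : ℝ, X (t + δt / 2) = X t * B := by
    intro t
    rw [hBdef, ← hXadd]
  have hE2' : ∀ t : ℝ, X (-(t + δt / 2)) = X (-t) * B' := by
    intro t
    rw [hB'def, ← hXadd]
    congr 1; ring
  have hE3 : ∀ t : ℝ, X (t + δt / 2 + δt) = X t * B * B * B := by
    intro t
    rw [hBdef, ← hXadd, ← hXadd, ← hXadd]
    congr 1; ring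
  have hE3' : ∀ t : ℝ, X (-(t + δt / 2 + δt)) = X (-t) * B' * B' * B' := by
    intro t
    rw [hB'def, ← hXadd, ← hXadd, ← hXadd]
    congr 1; ring
  have stepP : ∀ t : ℝ, p (t + δt) = p t + (δt : ℂ) * κ * β * v (t + δt / 2) := by
    intro t
    apply mul_left_cancel₀ h2Iω
    have e := ep (t + δt)
    rw [hE1 t, hE1' t] at e
    have e0 := ep t
    have ev1 := ev (t + δt / 2)
    rw [hE2 t, hE2' t] at ev1
    linear_combination e - e0 - (Complex.I * (δt : ℂ) * (κ : ℂ) * (ω : ℂ)) * ev1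
      - (Complex.I * (c₁ * X t * B + c₂ * X (-t) * B')) * hκc
      - (c₁ * X t * B + c₂ * X (-t) * B') * hs
      + (c₁ * X t - c₂ * X (-t)) * hBB
  -- the V-step identity
  have stepV : ∀ t : ℝ, v (t + δt / 2 + δt) =
      v (t + δt / 2) + (δt : ℂ) * κ * α * p (t + δt) := by
    intro t
    have h2Iωβ : (2 * Complex.I * (ω : ℂ) * β) ≠ 0 := mul_ne_zero h2Iω hβ
    apply mul_left_cancel₀ h2Iωβ
    have evp := ev (t + δt / 2 + δt)
    rw [hE3 t, hE3' t] at evp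
    have ev0 := ev (t + δt / 2)
    rw [hE2 t, hE2' t] at ev0
    have epp := ep (t + δt)
    rw [hE1 t, hE1' t] at epp
    linear_combination (Complex.I * (ω : ℂ)) * evp - (Complex.I * (ω : ℂ)) * ev0
      - ((δt : ℂ) * (κ : ℂ) * α * β) * epp
      - ((δt : ℂ) * (κ : ℂ) * (c₁ * X t * B * B - c₂ * X (-t) * B' * B')) * hαβ
      + ((ω : ℂ) * (c₁ * X t * B * B - c₂ * X (-t) * B' * B')) * hκc
      - (Complex.I * (ω : ℂ) * (c₁ * X t * B * B - c₂ * X (-t) * B' * B')) * hs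
      + (2 * ((Real.sin (ω * δt / 2) : ℝ) : ℂ) * (ω : ℂ) *
          (c₁ * X t * B * B - c₂ * X (-t) * B' * B')) * Complex.I_sq
      + (Complex.I * (ω : ℂ) * (c₁ * X t * B + c₂ * X (-t) * B')) * hBB
  -- induction
  intro n
  induction n with
  | zero =>
    constructor
    · rw [hP0]; norm_num
    · rw [hV0]; norm_num
  | succ n ih =>
    obtain ⟨ihP, ihV⟩ := ih
    have hPn : P (n + 1) = p ((n + 1 : ℕ) * δt) := by
      rw [hPrec, ihP, ihV, ← stepP (n * δt)]
      congr 1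
      push_cast; ring
    refine ⟨hPn, ?_⟩
    rw [hVrec, ihV, hPn]
    have hst := stepV (n * δt)
    rw [show ((n : ℝ) * δt + δt / 2 + δt) = ((n + 1 : ℕ) : ℝ) * δt + δt / 2 by push_cast; ring,
      show ((n : ℝ) * δt + δt) = ((n + 1 : ℕ) : ℝ) * δt by push_cast; ring] at hst
    exact hst.symm
end

section
/- Let ω be a positive real number, α and β nonzero complex numbers with α·β = −ω², and v, p : ℝ → ℂ differentiable functions satisfying v′(t) = α·p(t) and p′(t) = β·v(t) for all real t. Let N ≥ 1 and let δt₁, …, δt_N be positive real numbers with cos(ωδtₙ/2) ≠ 0 for every n, and set t₀ = 0, tₙ = tₙ₋₁ + δtₙ. Define κ(δt) = 2 sin(ωδt/2)/(ωδt), and for consecutive steps (δt, δt′) define κ₁(δt, δt′) = (2/(δt + δt′))·(sin(ωδt′/2)/ω + (sin(ωδt/2)/ω)·(cos(ωδt′/2)/cos(ωδt/2))) and κ₂(δt, δt′) = (2/(δt + δt′))·(cos(ωδt′/2)/cos(ωδt/2) − 1). Define the discrete scheme: P₀ = p(0); V₀ = cos(ωδt₁/2)·v(0) + (sin(ωδt₁/2)/ω)·α·p(0);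 for 1 ≤ n ≤ N: Pₙ = Pₙ₋₁ + δtₙ·κ(δtₙ)·β·Vₙ₋₁; and for 1 ≤ n ≤ N−1: Vₙ = Vₙ₋₁ + ((δtₙ + δtₙ₊₁)/2)·(κ₁(δtₙ, δtₙ₊₁)·α·Pₙ + κ₂(δtₙ, δtₙ₊₁)·Vₙ₋₁). Then Pₙ = p(tₙ) for all 0 ≤ n ≤ N and Vₙ = v(tₙ + δtₙ₊₁/2) for all 0 ≤ n ≤ N−1; i.e. the non-uniform time-stepping k-space scheme is exact for the per-mode acoustic system. -/
open Complex Real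

/-- The uniform k-space correction κ(δt) = 2 sin(ωδt/2)/(ωδt). -/
noncomputable def kspaceKappa (ω δt : ℝ) : ℝ :=
  2 * Real.sin (ω * δt / 2) / (ω * δt)

/-- The first staggered k-space correction κ₁(δt, δt′) for past step δt and future step δt′. -/
noncomputable def kspaceKappa₁ (ω δt δt' : ℝ) : ℝ :=
  (2 / (δt + δt')) * (Real.sin (ω * δt' / 2) / ω
    + (Real.sin (ω * δt / 2) / ω) * (Real.cos (ω * δt' / 2) / Real.cos (ω * δt / 2)))

/-- The second staggered k-space correction κ₂(δt, δt′) for past step δt and future step δt′. -/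
noncomputable def kspaceKappa₂ (ω δt δt' : ℝ) : ℝ :=
  (2 / (δt + δt')) * (Real.cos (ω * δt' / 2) / Real.cos (ω * δt / 2) - 1)

private lemma lin_ode (μ : ℂ) (f : ℝ → ℂ) (hf : Differentiable ℝ f)
    (hf' : ∀ t : ℝ, deriv f t = μ * f t) :
    ∀ s x : ℝ, f (s + x) = Complex.exp (μ * x) * f s := by
  have hg : ∀ t : ℝ, HasDerivAt (fun t : ℝ => Complex.exp (-μ * t) * f t) 0 t := by
    intro t
    have he : HasDerivAt (fun t : ℝ => Complex.exp (-μ * t))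
        (Complex.exp (-μ * t) * (-μ)) t := by
      have h0 : HasDerivAt (fun y : ℝ => -μ * (y : ℂ)) (-μ) t := by
        simpa using (((hasDerivAt_id (t : ℂ)).const_mul (-μ)).comp_ofReal)
      simpa [mul_comm] using h0.cexp
    have := he.mul ((hf t).hasDerivAt)
    rw [hf' t] at this
    refine this.congr_deriv ?_
    ring
  have hconst : ∀ a b : ℝ, Complex.exp (-μ * a) * f a = Complex.exp (-μ * b) * f b := by
    apply is_const_of_deriv_eq_zero
    · exact fun t => (hg t).differentiableAt
    · exact fun t => (hg t).deriv
  intro s x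
  have h := hconst (s + x) s
  push_cast at h
  calc f (s + x) = Complex.exp (μ * (↑s + ↑x)) * (Complex.exp (-μ * (↑s + ↑x)) * f (s + x)) := by
        rw [← mul_assoc, ← Complex.exp_add]; simp
    _ = Complex.exp (μ * (↑s + ↑x)) * (Complex.exp (-μ * ↑s) * f s) := by rw [h]
    _ = Complex.exp (μ * x) * f s := by
        rw [← mul_assoc, ← Complex.exp_add, show μ * (↑s + ↑x) + -μ * ↑s = μ * ↑x by ring]

private lemma sol_formula (ω : ℝ) (hω : ω ≠ 0) (α β : ℂ) (hα : α ≠ 0)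
    (hαβ : α * β = -(ω : ℂ) ^ 2)
    (v p : ℝ → ℂ) (hv : Differentiable ℝ v) (hp : Differentiable ℝ p)
    (hv' : ∀ t : ℝ, deriv v t = α * p t) (hp' : ∀ t : ℝ, deriv p t = β * v t) :
    ∀ s x : ℝ,
      v (s + x) = Complex.cos (ω * x) * v s + Complex.sin (ω * x) / ω * α * p s ∧
      p (s + x) = Complex.cos (ω * x) * p s + Complex.sin (ω * x) / ω * β * v s := by
  have hωC : ((ω : ℂ)) ≠ 0 := Complex.ofReal_ne_zero.mpr hω
  have hplus : ∀ s x : ℝ, (ω : ℂ) * v (s + x) + I * α * p (s + x)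
      = Complex.exp (-(I * ω) * x) * ((ω : ℂ) * v s + I * α * p s) := by
    refine lin_ode _ (fun t => (ω : ℂ) * v t + I * α * p t)
      ((hv.const_mul _).add (hp.const_mul _)) fun t => ?_
    show deriv (fun t => (ω : ℂ) * v t + I * α * p t) t
      = -(I * ↑ω) * ((ω : ℂ) * v t + I * α * p t)
    rw [deriv_fun_add ((hv t).const_mul _) ((hp t).const_mul _),
      deriv_const_mul _ (hv t), deriv_const_mul _ (hp t), hv' t, hp' t]
    linear_combination I * v t * hαβ + (ω : ℂ) * α * p t * Complex.I_sq
  have hminus : ∀ s x : ℝ, (ω : ℂ) * v (s + x) - I * α * p (s + x)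
      = Complex.exp ((I * ω) * x) * ((ω : ℂ) * v s - I * α * p s) := by
    refine lin_ode _ (fun t => (ω : ℂ) * v t - I * α * p t)
      ((hv.const_mul _).sub (hp.const_mul _)) fun t => ?_
    show deriv (fun t => (ω : ℂ) * v t - I * α * p t) t
      = (I * ↑ω) * ((ω : ℂ) * v t - I * α * p t)
    rw [deriv_fun_sub ((hv t).const_mul _) ((hp t).const_mul _),
      deriv_const_mul _ (hv t), deriv_const_mul _ (hp t), hv' t, hp' t]
    linear_combination (-I) * v t * hαβ + (ω : ℂ) * α * p t * Complex.I_sq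
  intro s x
  have h1 := hplus s x
  have h2 := hminus s x
  rw [show -(I * (ω:ℂ)) * x = (-((ω:ℂ) * x)) * I by ring, Complex.exp_mul_I,
    Complex.cos_neg, Complex.sin_neg] at h1
  rw [show (I * (ω:ℂ)) * x = ((ω:ℂ) * x) * I by ring, Complex.exp_mul_I] at h2
  constructor
  · have goal1 : (ω : ℂ) * v (s + x)
        = (ω : ℂ) * (Complex.cos (ω * x) * v s) + Complex.sin (ω * x) * α * p s := by
      linear_combination h1 / 2 + h2 / 2 - Complex.sin (ω * x) * α * p s * Complex.I_sq
    field_simp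
    linear_combination goal1
  · have goal2 : (I * α) * p (s + x)
        = (I * α) * (Complex.cos (ω * x) * p s) - I * Complex.sin (ω * x) * (ω : ℂ) * v s := by
      linear_combination h1 / 2 - h2 / 2
    have hIα : I * α ≠ 0 := mul_ne_zero Complex.I_ne_zero hα
    refine mul_left_cancel₀ hIα ?_
    rw [goal2]
    field_simp
    linear_combination (-Complex.sin (ω * x) * v s) * hαβ

theorem nonuniform_kspace_scheme_exact
    (ω : ℝ) (hω : 0 < ω) (α β : ℂ) (hα : α ≠ 0) (hβ : β ≠ 0)
    (hαβ : α * β = -(ω : ℂ) ^ 2)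
    (v p : ℝ → ℂ) (hv : Differentiable ℝ v) (hp : Differentiable ℝ p)
    (hv' : ∀ t : ℝ, deriv v t = α * p t) (hp' : ∀ t : ℝ, deriv p t = β * v t)
    (N : ℕ) (hN : 1 ≤ N) (δt : ℕ → ℝ)
    (hδtpos : ∀ n, 1 ≤ n → n ≤ N → 0 < δt n)
    (hδtcos : ∀ n, 1 ≤ n → n ≤ N → Real.cos (ω * δt n / 2) ≠ 0)
    (ts : ℕ → ℝ) (hts0 : ts 0 = 0)
    (hts : ∀ n, 1 ≤ n → n ≤ N → ts n = ts (n - 1) + δt n)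
    (P V : ℕ → ℂ)
    (hP0 : P 0 = p 0)
    (hV0 : V 0 = (Real.cos (ω * δt 1 / 2) : ℂ) * v 0
        + ((Real.sin (ω * δt 1 / 2) / ω : ℝ) : ℂ) * α * p 0)
    (hPrec : ∀ n, 1 ≤ n → n ≤ N →
      P n = P (n - 1) + (δt n : ℂ) * (kspaceKappa ω (δt n) : ℝ) * β * V (n - 1))
    (hVrec : ∀ n, 1 ≤ n → n ≤ N - 1 →
      V n = V (n - 1) + (((δt n + δt (n + 1)) / 2 : ℝ) : ℂ)
          * ((kspaceKappa₁ ω (δt n) (δt (n + 1)) : ℝ) * α * P n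
            + (kspaceKappa₂ ω (δt n) (δt (n + 1)) : ℝ) * V (n - 1))) :
    (∀ n, n ≤ N → P n = p (ts n)) ∧
    (∀ n, n ≤ N - 1 → V n = v (ts n + δt (n + 1) / 2)) := by
  have hω0 : ω ≠ 0 := ne_of_gt hω
  have hωC : ((ω : ℂ)) ≠ 0 := Complex.ofReal_ne_zero.mpr hω0
  have sol := sol_formula ω hω0 α β hα hαβ v p hv hp hv' hp'
  -- real-cast versions
  have solv : ∀ s x : ℝ, v (s + x)
      = (Real.cos (ω * x) : ℂ) * v s + ((Real.sin (ω * x) : ℝ) : ℂ) / ω * α * p s := by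
    intro s x
    rw [(sol s x).1]
    push_cast
    ring
  have solp : ∀ s x : ℝ, p (s + x)
      = (Real.cos (ω * x) : ℂ) * p s + ((Real.sin (ω * x) : ℝ) : ℂ) / ω * β * v s := by
    intro s x
    rw [(sol s x).2]
    push_cast
    ring
  have main : ∀ n, n ≤ N →
      (P n = p (ts n)) ∧ (n ≤ N - 1 → V n = v (ts n + δt (n + 1) / 2)) := by
    intro n
    induction n with
    | zero =>
      intro _
      refine ⟨by rw [hP0, hts0], fun _ => ?_⟩
      have h := solv 0 (δt 1 / 2)
      rw [show ω * (δt 1 / 2) = ω * δt 1 / 2 by ring] at h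
      rw [hV0, hts0, h]
      push_cast
      ring
    | succ n ih =>
      intro hn1N
      have hnN : n ≤ N := le_trans (Nat.le_succ n) hn1N
      have hnN1 : n ≤ N - 1 := Nat.le_pred_of_lt (lt_of_lt_of_le (Nat.lt_succ_self n) hn1N)
      obtain ⟨ihP, ihV⟩ := ih hnN
      have ihV := ihV hnN1
      set δ := δt (n + 1) with hδdef
      have hδpos : 0 < δ := hδtpos (n + 1) (Nat.le_add_left 1 n) hn1N
      have hδne : δ ≠ 0 := ne_of_gt hδpos
      have hcosδ : Real.cos (ω * δ / 2) ≠ 0 := hδtcos (n + 1) (Nat.le_add_left 1 n) hn1N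
      have htsn1 : ts (n + 1) = ts n + δ := by
        have := hts (n + 1) (Nat.le_add_left 1 n) hn1N
        simpa using this
      -- P part
      have hPn1 : P (n + 1) = p (ts (n + 1)) := by
        have hrec := hPrec (n + 1) (Nat.le_add_left 1 n) hn1N
        simp only [Nat.add_sub_cancel] at hrec
        -- midpoint
        have hA := solp (ts n + δ / 2) (δ / 2)
        have hB := solp (ts n + δ / 2) (-(δ / 2))
        rw [show ω * -(δ / 2) = -(ω * δ / 2) by ring, Real.cos_neg, Real.sin_neg] at hB
        rw [show ω * (δ / 2) = ω * δ / 2 by ring] at hA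
        rw [show ts n + δ / 2 + δ / 2 = ts n + δ by ring] at hA
        rw [show ts n + δ / 2 + -(δ / 2) = ts n by ring] at hB
        have hκ : δ * kspaceKappa ω δ = 2 * Real.sin (ω * δ / 2) / ω := by
          rw [kspaceKappa]
          field_simp
        have hκC : (δ : ℂ) * ((kspaceKappa ω δ : ℝ) : ℂ)
            = 2 * ((Real.sin (ω * δ / 2) : ℝ) : ℂ) / (ω : ℂ) := by
          rw [← Complex.ofReal_mul, hκ]
          push_cast
          ring
        rw [hrec, htsn1, ihP, ihV, hκC, hA, hB]
        push_cast
        ring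
      refine ⟨hPn1, fun hn1N1 => ?_⟩
      -- V part
      set δ' := δt (n + 2) with hδ'def
      have hn2N : n + 2 ≤ N := by omega
      have hδ'pos : 0 < δ' := hδtpos (n + 2) (by omega) hn2N
      have hsum : δ + δ' ≠ 0 := by positivity
      have hrec := hVrec (n + 1) (Nat.le_add_left 1 n) hn1N1
      simp only [Nat.add_sub_cancel] at hrec
      have hA := solv (ts (n + 1)) (δ' / 2)
      have hB := solv (ts (n + 1)) (-(δ / 2))
      rw [show ω * -(δ / 2) = -(ω * δ / 2) by ring, Real.cos_neg, Real.sin_neg] at hB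
      rw [show ω * (δ' / 2) = ω * δ' / 2 by ring] at hA
      rw [show ts (n + 1) + -(δ / 2) = ts n + δ / 2 by rw [htsn1]; ring] at hB
      -- coefficient identities (real)
      have hc₁ : (δ + δ') / 2 * kspaceKappa₁ ω δ δ' * Real.cos (ω * δ / 2)
          = Real.sin (ω * δ' / 2) / ω * Real.cos (ω * δ / 2)
            + Real.sin (ω * δ / 2) / ω * Real.cos (ω * δ' / 2) := by
        rw [kspaceKappa₁]
        field_simp [show Real.cos (δ * ω / 2) ≠ 0 by rwa [mul_comm] at hcosδ]
      have hc₂ : (δ + δ') / 2 * kspaceKappa₂ ω δ δ' * Real.cos (ω * δ / 2)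
          = Real.cos (ω * δ' / 2) - Real.cos (ω * δ / 2) := by
        rw [kspaceKappa₂]
        field_simp [show Real.cos (δ * ω / 2) ≠ 0 by rwa [mul_comm] at hcosδ]
      have hc₁C : (((δ + δ') / 2 : ℝ) : ℂ) * ((kspaceKappa₁ ω δ δ' : ℝ) : ℂ)
            * ((Real.cos (ω * δ / 2) : ℝ) : ℂ)
          = ((Real.sin (ω * δ' / 2) : ℝ) : ℂ) / ω * ((Real.cos (ω * δ / 2) : ℝ) : ℂ)
            + ((Real.sin (ω * δ / 2) : ℝ) : ℂ) / ω * ((Real.cos (ω * δ' / 2) : ℝ) : ℂ) := by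
        exact_mod_cast hc₁
      have hc₂C : (((δ + δ') / 2 : ℝ) : ℂ) * ((kspaceKappa₂ ω δ δ' : ℝ) : ℂ)
            * ((Real.cos (ω * δ / 2) : ℝ) : ℂ)
          = ((Real.cos (ω * δ' / 2) : ℝ) : ℂ) - ((Real.cos (ω * δ / 2) : ℝ) : ℂ) := by
        exact_mod_cast hc₂
      have hCne : ((Real.cos (ω * δ / 2) : ℝ) : ℂ) ≠ 0 := Complex.ofReal_ne_zero.mpr hcosδ
      rw [Complex.ofReal_neg] at hB
      refine mul_left_cancel₀ hCne ?_
      rw [hrec, ihV, hPn1, hA, hB]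
      linear_combination (α * p (ts (n + 1))) * hc₁C
        + (((Real.cos (ω * δ / 2) : ℝ) : ℂ) * v (ts (n + 1))
          - ((Real.sin (ω * δ / 2) : ℝ) : ℂ) / ω * α * p (ts (n + 1))) * hc₂C
  refine ⟨fun n hn => (main n hn).1, fun n hn => (main n (le_trans hn (Nat.sub_le N 1))).2 hn⟩
end
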